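/- Let 1 ≤ p < ∞ and let Y be a (real or complex) Banach space. If there exists an isomorphic embedding of c₀ into ℓ_p ⊕ Y (i.e. a bounded linear map J : c₀ → ℓ_p ⊕ Y and a constant c > 0 with ‖Jx‖ ≥ c‖x‖ for all x), then there exists an isomorphic embedding of c₀ into Y. -/

import Mathlib

/-!
Let `T : c₀ → ℓ_p` be the first component of the embedding `J`. Operators `c₀ → ℓ_p` with
`p < ∞` are uniformly small on vectors supported far out: otherwise one finds disjointly supported
unit blocks `y_k` with `‖T y_k‖ > ε`. All signed sums of the `y_k` have norm `≤ 1` in `c₀`, so the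
`T y_k` are coordinatewise null, and a gliding hump makes a subsequence of them an almost disjoint
sequence in `ℓ_p`; its partial sums grow like `K ^ (1 / p)`, although they are bounded by `‖T‖`.
Choosing `N` with `‖T y‖ ≤ c / 2 ‖y‖` whenever `y` vanishes below `N`, the shift by `N` followed
by `J` and the projection onto `Y` is an embedding with constant `c / 2`.
-/

open Filter Function Topology Finset ZeroAtInfty
open scoped ENNReal

theorem exists_seq_forall_rel_succ {α : Type*} [Nonempty α] {R : ℕ → α → α → Prop}
    (h : ∀ k x, ∃ y, R k x y) : ∃ f : ℕ → α, ∀ k, R k (f k) (f (k + 1)) := by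
  choose next hnext using h
  exact ⟨fun k => Nat.rec (Classical.arbitrary α) next k, fun k => hnext k _⟩

namespace ZeroAtInftyContinuousMap

section Norm

variable {α E : Type*} [TopologicalSpace α] [NormedAddCommGroup E]

theorem norm_apply_le (x : C₀(α, E)) (a : α) : ‖x a‖ ≤ ‖x‖ :=
  x.toBCF.norm_coe_le_norm a

theorem norm_le_of_forall {x : C₀(α, E)} {C : ℝ} (hC : 0 ≤ C) (h : ∀ a, ‖x a‖ ≤ C) : ‖x‖ ≤ C :=
  (BoundedContinuousFunction.norm_le hC).2 h

theorem sum_apply {ι : Type*} (G : Finset ι) (x : ι → C₀(α, E)) (a : α) :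
    (∑ j ∈ G, x j) a = ∑ j ∈ G, x j a := by
  induction G using Finset.cons_induction with
  | empty => rfl
  | cons j G hj ih => rw [Finset.sum_cons, Finset.sum_cons, add_apply, ih]

theorem norm_sum_smul_le_one {𝕜 ι : Type*} [NormedField 𝕜] [NormedSpace 𝕜 E] {s : ι → Set α}
    (hs : Pairwise (Disjoint on s)) {y : ι → C₀(α, E)} (hy : ∀ j, ∀ a ∉ s j, y j a = 0)
    (hy1 : ∀ j, ‖y j‖ ≤ 1) (G : Finset ι) {η : ι → 𝕜} (hη : ∀ j, ‖η j‖ ≤ 1) :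
    ‖∑ j ∈ G, η j • y j‖ ≤ 1 := by
  refine norm_le_of_forall zero_le_one fun a => ?_
  rw [sum_apply]
  by_cases ha : ∃ j ∈ G, a ∈ s j
  · obtain ⟨j, hjG, hj⟩ := ha
    rw [Finset.sum_eq_single_of_mem j hjG fun i _ hij => by
      rw [smul_apply, hy i a ((hs hij).symm.notMem_of_mem_left hj), smul_zero]]
    rw [smul_apply, norm_smul]
    exact mul_le_one₀ (hη j) (norm_nonneg _) ((norm_apply_le _ a).trans (hy1 j))
  · push Not at ha
    rw [Finset.sum_eq_zero fun j hj => by rw [smul_apply, hy j a (ha j hj), smul_zero], norm_zero]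
    exact zero_le_one

end Norm

section Nat

variable {E : Type*} [NormedAddCommGroup E]

def ofTendsto (f : ℕ → E) (hf : Tendsto f atTop (𝓝 0)) : C₀(ℕ, E) where
  toFun := f
  continuous_toFun := continuous_of_discreteTopology
  zero_at_infty' := by rwa [cocompact_eq_cofinite, Nat.cofinite_eq_atTop]

theorem tendsto_atTop (x : C₀(ℕ, E)) : Tendsto x atTop (𝓝 0) := by
  simpa [cocompact_eq_cofinite, Nat.cofinite_eq_atTop] using x.zero_at_infty'

def truncate (K : ℕ) (x : C₀(ℕ, E)) : C₀(ℕ, E) :=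
  ofTendsto (fun n => if n < K then x n else 0) <|
    tendsto_const_nhds.congr' <| (eventually_ge_atTop K).mono fun _ hn => (if_neg hn.not_gt).symm

theorem truncate_apply (K : ℕ) (x : C₀(ℕ, E)) (n : ℕ) :
    truncate K x n = if n < K then x n else 0 :=
  rfl

theorem norm_truncate_le (K : ℕ) (x : C₀(ℕ, E)) : ‖truncate K x‖ ≤ ‖x‖ :=
  norm_le_of_forall (norm_nonneg x) fun n => by
    rw [truncate_apply]
    split_ifs
    exacts [norm_apply_le x n, (norm_zero (E := E)).trans_le (norm_nonneg x)]

theorem tendsto_truncate (x : C₀(ℕ, E)) : Tendsto (truncate · x) atTop (𝓝 x) := by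
  refine Metric.tendsto_atTop.2 fun ε hε => ?_
  obtain ⟨K, hK⟩ := Metric.tendsto_atTop.1 x.tendsto_atTop (ε / 2) (half_pos hε)
  refine ⟨K, fun K' hK' => ?_⟩
  rw [dist_eq_norm]
  refine (norm_le_of_forall (half_pos hε).le fun n => ?_).trans_lt (half_lt_self hε)
  rw [sub_apply, truncate_apply]
  split_ifs with hn
  · simpa using (half_pos hε).le
  · simpa using (hK n (by omega)).le

def shiftFun (N : ℕ) (x : C₀(ℕ, E)) : C₀(ℕ, E) :=
  ofTendsto (fun n => if N ≤ n then x (n - N) else 0) <|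
    (x.tendsto_atTop.comp (tendsto_sub_atTop_nat N)).congr' <|
      (eventually_ge_atTop N).mono fun _ hn => (if_pos hn).symm

theorem shiftFun_apply (N : ℕ) (x : C₀(ℕ, E)) (n : ℕ) :
    shiftFun N x n = if N ≤ n then x (n - N) else 0 :=
  rfl

theorem norm_shiftFun (N : ℕ) (x : C₀(ℕ, E)) : ‖shiftFun N x‖ = ‖x‖ := by
  refine le_antisymm (norm_le_of_forall (norm_nonneg x) fun n => ?_)
    (norm_le_of_forall (norm_nonneg _) fun n => ?_)
  · rw [shiftFun_apply]
    split_ifs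
    exacts [norm_apply_le x _, (norm_zero (E := E)).trans_le (norm_nonneg x)]
  · simpa [shiftFun_apply] using norm_apply_le (shiftFun N x) (n + N)

variable (𝕜 : Type*) [NormedField 𝕜] [NormedSpace 𝕜 E]

def shift (N : ℕ) : C₀(ℕ, E) →ₗᵢ[𝕜] C₀(ℕ, E) where
  toFun := shiftFun N
  map_add' x y := ext fun n => by simp only [shiftFun_apply, add_apply]; split_ifs <;> simp
  map_smul' c x := ext fun n => by simp only [shiftFun_apply, smul_apply]; split_ifs <;> simp
  norm_map' := norm_shiftFun N

theorem shift_apply_of_lt {N n : ℕ} (hn : n < N) (x : C₀(ℕ, E)) : shift 𝕜 N x n = 0 :=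
  if_neg hn.not_ge

end Nat

end ZeroAtInftyContinuousMap

theorem tendsto_apply_zero_of_norm_sum_smul_le {𝕜 E : Type*} [RCLike 𝕜] [NormedAddCommGroup E]
    [NormedSpace 𝕜 E] (φ : E →L[𝕜] 𝕜) {x : ℕ → E} {C : ℝ}
    (hx : ∀ (G : Finset ℕ) (η : ℕ → 𝕜), (∀ j, ‖η j‖ ≤ 1) → ‖∑ j ∈ G, η j • x j‖ ≤ C) :
    Tendsto (fun j => φ (x j)) atTop (𝓝 0) := by
  choose η hη1 hη using fun j => RCLike.exists_norm_eq_mul_self (φ (x j))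
  have hsum : ∀ n, ∑ j ∈ range n, ‖φ (x j)‖ ≤ ‖φ‖ * C := fun n => by
    have h := φ.le_opNorm_of_le (hx (range n) η fun j => (hη1 j).le)
    rwa [map_sum, Finset.sum_congr rfl fun j _ => by rw [map_smul, smul_eq_mul, ← hη j],
      ← RCLike.ofReal_sum, RCLike.norm_ofReal,
      abs_of_nonneg (Finset.sum_nonneg fun j _ => norm_nonneg _)] at h
  exact tendsto_zero_iff_norm_tendsto_zero.2
    (summable_of_sum_range_le (fun j => norm_nonneg _) hsum).tendsto_atTop_zero

namespace lp

section

variable {α : Type*} {E : α → Type*} [∀ i, NormedAddCommGroup (E i)] {q : ℝ≥0∞}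

theorem norm_rpow_sum_of_disjoint (hq : 0 < q.toReal) {ι : Type*} {s : ι → Set α}
    (hs : Pairwise (Disjoint on s)) {w : ι → lp E q} (hw : ∀ j, ∀ i ∉ s j, w j i = 0)
    (G : Finset ι) : ‖∑ j ∈ G, w j‖ ^ q.toReal = ∑ j ∈ G, ‖w j‖ ^ q.toReal := by
  have hzero : ∀ i, ‖(0 : E i)‖ ^ q.toReal = 0 := fun i => by simp [Real.zero_rpow hq.ne']
  have hpoint : ∀ i, ‖∑ j ∈ G, w j i‖ ^ q.toReal = ∑ j ∈ G, ‖w j i‖ ^ q.toReal := fun i => by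
    by_cases hi : ∃ j ∈ G, i ∈ s j
    · obtain ⟨j, hjG, hj⟩ := hi
      have hother : ∀ k ∈ G, k ≠ j → w k i = 0 := fun k _ hkj =>
        hw k i ((hs hkj).symm.notMem_of_mem_left hj)
      rw [Finset.sum_eq_single_of_mem j hjG hother,
        Finset.sum_eq_single_of_mem j hjG fun k hk hkj => by rw [hother k hk hkj, hzero i]]
    · push Not at hi
      rw [Finset.sum_eq_zero fun j hj => hw j i (hi j hj),
        Finset.sum_eq_zero fun j hj => by rw [hw j i (hi j hj), hzero i], hzero i]
  calc ‖∑ j ∈ G, w j‖ ^ q.toReal = ∑' i, ∑ j ∈ G, ‖w j i‖ ^ q.toReal := by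
        simp_rw [lp.norm_rpow_eq_tsum hq, lp.coeFn_sum, Finset.sum_apply, hpoint]
    _ = ∑ j ∈ G, ‖w j‖ ^ q.toReal := by
        rw [Summable.tsum_finsetSum fun j _ => (lp.memℓp (w j)).summable hq]
        simp_rw [lp.norm_rpow_eq_tsum hq]

end

section

variable {E : ℕ → Type*} [∀ i, NormedAddCommGroup (E i)] {q : ℝ≥0∞}

theorem tendsto_sum_single_of_tendsto_apply [Fact (1 ≤ q)] {u : ℕ → lp E q}
    (hu : ∀ i, Tendsto (fun j => u j i) atTop (𝓝 0)) (s : Finset ℕ) :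
    Tendsto (fun j => ∑ i ∈ s, lp.single q i (u j i)) atTop (𝓝 0) := by
  have hq : 0 < q := zero_lt_one.trans_le Fact.out
  simpa using tendsto_finsetSum (f := fun i j => lp.single q i (u j i)) (a := fun _ => 0) s
    fun i _ => tendsto_zero_iff_norm_tendsto_zero.2 <| by
      simpa [lp.norm_single hq] using (hu i).norm

theorem exists_norm_sub_sum_single_Ico_le [Fact (1 ≤ q)] (hq : q ≠ ∞) {u : ℕ → lp E q}
    (hu : ∀ i, Tendsto (fun j => u j i) atTop (𝓝 0)) (j m : ℕ) {ε : ℝ} (hε : 0 < ε) :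
    ∃ j' > j, ∃ m' ≥ m, ‖u j' - ∑ i ∈ Ico m m', lp.single q i (u j' i)‖ ≤ ε := by
  obtain ⟨j', hhead, hj'⟩ := ((tendsto_zero_iff_norm_tendsto_zero.1
    (tendsto_sum_single_of_tendsto_apply hu (range m))).eventually (gt_mem_nhds (half_pos hε))
    |>.and (eventually_gt_atTop j)).exists
  obtain ⟨m', htail, hm'⟩ := ((tendsto_iff_norm_sub_tendsto_zero.1
    (lp.hasSum_single hq (u j')).tendsto_sum_nat).eventually (gt_mem_nhds (half_pos hε))
    |>.and (eventually_ge_atTop m)).exists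
  refine ⟨j', hj', m', hm', ?_⟩
  have hsplit : u j' - ∑ i ∈ Ico m m', lp.single q i (u j' i) =
      ∑ i ∈ range m, lp.single q i (u j' i) - (∑ i ∈ range m', lp.single q i (u j' i) - u j') := by
    rw [← sum_range_add_sum_Ico _ hm']
    abel
  rw [hsplit]
  linarith [norm_sub_le (∑ i ∈ range m, lp.single q i (u j' i))
    (∑ i ∈ range m', lp.single q i (u j' i) - u j')]

theorem exists_subseq_near_disjointly_supported [Fact (1 ≤ q)] (hq : q ≠ ∞) {u : ℕ → lp E q}
    (hu : ∀ i, Tendsto (fun j => u j i) atTop (𝓝 0)) {e : ℕ → ℝ} (he : ∀ k, 0 < e k) :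
    ∃ (φ : ℕ → ℕ) (s : ℕ → Set ℕ) (w : ℕ → lp E q), StrictMono φ ∧ Pairwise (Disjoint on s) ∧
      (∀ k, ∀ i ∉ s k, w k i = 0) ∧ ∀ k, ‖u (φ k) - w k‖ ≤ e k := by
  obtain ⟨f, hf⟩ := exists_seq_forall_rel_succ (R := fun k (a b : ℕ × ℕ) => a.1 < b.1 ∧
      a.2 ≤ b.2 ∧ ‖u b.1 - ∑ i ∈ Ico a.2 b.2, lp.single q i (u b.1 i)‖ ≤ e k) fun k a => by
    obtain ⟨j', hj', m', hm', h⟩ := exists_norm_sub_sum_single_Ico_le hq hu a.1 a.2 (he k)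
    exact ⟨(j', m'), hj', hm', h⟩
  refine ⟨fun k => (f (k + 1)).1, fun k => Set.Ico (f k).2 (f (k + 1)).2,
    fun k => ∑ i ∈ Ico (f k).2 (f (k + 1)).2, lp.single q i (u (f (k + 1)).1 i),
    strictMono_nat_of_lt_succ fun k => (hf (k + 1)).1, ?_, fun k i hi => ?_, fun k => (hf k).2.2⟩
  · simpa [Order.succ_eq_add_one] using
      (monotone_nat_of_le_succ fun k => (hf k).2.1).pairwise_disjoint_on_Ico_succ
  · simp only [lp.coeFn_sum, Finset.sum_apply, lp.coeFn_single, Finset.sum_pi_single]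
    exact if_neg (by simpa using hi)

theorem exists_lt_norm_sum [Fact (1 ≤ q)] (hq : q ≠ ∞) {u : ℕ → lp E q}
    (hu : ∀ i, Tendsto (fun j => u j i) atTop (𝓝 0)) {δ : ℝ} (hδ : 0 < δ)
    (hδu : ∀ j, δ ≤ ‖u j‖) (M : ℝ) : ∃ G : Finset ℕ, M < ‖∑ j ∈ G, u j‖ := by
  by_contra! hM
  have hq' : 0 < q.toReal := ENNReal.toReal_pos (zero_lt_one.trans_le Fact.out).ne' hq
  obtain ⟨φ, s, w, hφ, hs, hw, herr⟩ := exists_subseq_near_disjointly_supported hq hu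
    (e := fun k => δ / 4 * (1 / 2) ^ k) fun k => by positivity
  have hw_norm : ∀ k, δ / 2 ≤ ‖w k‖ := fun k => by
    have : (1 / 2 : ℝ) ^ k ≤ 1 := pow_le_one₀ (by norm_num) (by norm_num)
    nlinarith [hδu (φ k), herr k, norm_sub_norm_le (u (φ k)) (w k)]
  have hsum_err : ∀ K, ‖∑ k ∈ range K, (u (φ k) - w k)‖ ≤ δ / 2 := fun K =>
    calc ‖∑ k ∈ range K, (u (φ k) - w k)‖ ≤ ∑ k ∈ range K, δ / 4 * (1 / 2) ^ k :=
          (norm_sum_le _ _).trans (sum_le_sum fun k _ => herr k)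
      _ ≤ δ / 2 := by
          rw [← mul_sum]
          nlinarith [sum_geometric_two_le K]
  have hsum_w : ∀ K, ‖∑ k ∈ range K, w k‖ ≤ M + δ / 2 := fun K => by
    have hv : ‖∑ k ∈ range K, u (φ k)‖ ≤ M := by
      rw [← sum_image fun _ _ _ _ h => hφ.injective h]
      exact hM _
    calc ‖∑ k ∈ range K, w k‖ = ‖∑ k ∈ range K, u (φ k) - ∑ k ∈ range K, (u (φ k) - w k)‖ := by
          rw [sum_sub_distrib, sub_sub_cancel]
      _ ≤ M + δ / 2 := (norm_sub_le _ _).trans (add_le_add hv (hsum_err K))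
  have hK : ∀ K : ℕ, K * (δ / 2) ^ q.toReal ≤ (M + δ / 2) ^ q.toReal := fun K =>
    calc K * (δ / 2) ^ q.toReal = ∑ k ∈ range K, (δ / 2) ^ q.toReal := by simp
      _ ≤ ∑ k ∈ range K, ‖w k‖ ^ q.toReal := sum_le_sum fun k _ =>
          Real.rpow_le_rpow (by positivity) (hw_norm k) hq'.le
      _ = ‖∑ k ∈ range K, w k‖ ^ q.toReal := (norm_rpow_sum_of_disjoint hq' hs hw _).symm
      _ ≤ (M + δ / 2) ^ q.toReal := Real.rpow_le_rpow (norm_nonneg _) (hsum_w K) hq'.le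
  obtain ⟨K, hK'⟩ := exists_nat_gt ((M + δ / 2) ^ q.toReal / (δ / 2) ^ q.toReal)
  rw [div_lt_iff₀ (by positivity)] at hK'
  linarith [hK K]

end

end lp

section Operator

variable {𝕜 : Type*} [RCLike 𝕜]

open ZeroAtInftyContinuousMap in
theorem exists_block_of_norm_apply_gt {F : Type*} [NormedAddCommGroup F] [NormedSpace 𝕜 F]
    (T : C₀(ℕ, 𝕜) →L[𝕜] F) {ε : ℝ} {N : ℕ} {y : C₀(ℕ, 𝕜)} (hy : ∀ n < N, y n = 0)
    (hTy : ε * ‖y‖ < ‖T y‖) :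
    ∃ N' ≥ N, ∃ z : C₀(ℕ, 𝕜), (∀ n ∉ Set.Ico N N', z n = 0) ∧ ‖z‖ ≤ 1 ∧ ε < ‖T z‖ := by
  have hy0 : ‖y‖ ≠ 0 := fun h => by simp [norm_eq_zero.1 h] at hTy
  set y₁ := (‖y‖⁻¹ : 𝕜) • y
  have hy₁ : ‖y₁‖ = 1 := by simp [y₁, norm_smul, hy0]
  have hTy₁ : ε < ‖T y₁‖ := by
    rw [map_smul, norm_smul, norm_inv, RCLike.norm_ofReal, abs_norm,
      lt_inv_mul_iff₀ (by positivity)]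
    linarith
  obtain ⟨K, hK, hKN⟩ := ((((T.continuous.tendsto y₁).comp (tendsto_truncate y₁)).norm.eventually
    (lt_mem_nhds hTy₁)).and (eventually_ge_atTop N)).exists
  refine ⟨K, hKN, truncate K y₁, fun n hn => ?_, hy₁ ▸ norm_truncate_le K y₁, hK⟩
  rw [truncate_apply]
  split_ifs with hnK
  · simp [y₁, hy n (by simp_all)]
  · rfl

theorem exists_norm_apply_le_of_eq_zero_below {q : ℝ≥0∞} [Fact (1 ≤ q)] (hq : q ≠ ∞)
    (T : C₀(ℕ, 𝕜) →L[𝕜] lp (fun _ : ℕ => 𝕜) q) {ε : ℝ} (hε : 0 < ε) :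
    ∃ N, ∀ y : C₀(ℕ, 𝕜), (∀ n < N, y n = 0) → ‖T y‖ ≤ ε * ‖y‖ := by
  by_contra! h
  obtain ⟨f, hf⟩ := exists_seq_forall_rel_succ (R := fun _ (a b : ℕ × C₀(ℕ, 𝕜)) => a.1 ≤ b.1 ∧
      (∀ n ∉ Set.Ico a.1 b.1, b.2 n = 0) ∧ ‖b.2‖ ≤ 1 ∧ ε < ‖T b.2‖) fun _ a => by
    obtain ⟨y, hy, hTy⟩ := h a.1
    obtain ⟨N', hN', z, hz⟩ := exists_block_of_norm_apply_gt T hy hTy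
    exact ⟨(N', z), hN', hz⟩
  set y : ℕ → C₀(ℕ, 𝕜) := fun k => (f (k + 1)).2
  have hdisj : Pairwise (Disjoint on fun k => Set.Ico (f k).1 (f (k + 1)).1) := by
    simpa [Order.succ_eq_add_one] using
      (monotone_nat_of_le_succ fun k => (hf k).1).pairwise_disjoint_on_Ico_succ
  have hy : ∀ (G : Finset ℕ) (η : ℕ → 𝕜), (∀ j, ‖η j‖ ≤ 1) → ‖∑ j ∈ G, η j • y j‖ ≤ 1 :=
    fun G _ hη => ZeroAtInftyContinuousMap.norm_sum_smul_le_one hdisj (fun k => (hf k).2.1)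
      (fun k => (hf k).2.2.1) G hη
  have hcoord : ∀ i, Tendsto (fun k => T (y k) i) atTop (𝓝 0) := fun i =>
    tendsto_apply_zero_of_norm_sum_smul_le ((lp.evalCLM 𝕜 (fun _ : ℕ => 𝕜) q i).comp T) hy
  obtain ⟨G, hG⟩ := lp.exists_lt_norm_sum hq hcoord hε (fun k => (hf k).2.2.2.le) ‖T‖
  have hG1 : ‖∑ j ∈ G, y j‖ ≤ 1 := by simpa using hy G 1 fun _ => norm_one.le
  rw [← map_sum] at hG
  nlinarith [T.le_opNorm (∑ j ∈ G, y j), norm_nonneg T]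

end Operator

open ZeroAtInftyContinuousMap in
theorem statement7_general (𝕜 : Type*) [RCLike 𝕜] (p : ℝ)
    [Fact (1 ≤ ENNReal.ofReal p)]
    (Y : Type*) [NormedAddCommGroup Y] [NormedSpace 𝕜 Y]
    (hembed : ∃ (J : ZeroAtInftyContinuousMap ℕ 𝕜 →L[𝕜]
        WithLp 1 ((lp (fun _ : ℕ => 𝕜) (ENNReal.ofReal p)) × Y)) (c : ℝ),
      0 < c ∧ ∀ x, c * ‖x‖ ≤ ‖J x‖) :
    ∃ (J' : ZeroAtInftyContinuousMap ℕ 𝕜 →L[𝕜] Y) (c' : ℝ),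
      0 < c' ∧ ∀ x, c' * ‖x‖ ≤ ‖J' x‖ := by
  obtain ⟨J, c, hc, hJ⟩ := hembed
  obtain ⟨N, hN⟩ := exists_norm_apply_le_of_eq_zero_below ENNReal.ofReal_ne_top
    ((WithLp.fstL 1 𝕜 _ Y).comp J) (half_pos hc)
  refine ⟨(WithLp.sndL 1 𝕜 _ Y).comp (J.comp (shift 𝕜 N).toContinuousLinearMap), c / 2,
    half_pos hc, fun x => ?_⟩
  have hfst : ‖(J (shift 𝕜 N x)).fst‖ ≤ c / 2 * ‖x‖ := by
    simpa using hN (shift 𝕜 N x) fun n hn => shift_apply_of_lt 𝕜 hn x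
  have hlow : c * ‖x‖ ≤ ‖(J (shift 𝕜 N x)).fst‖ + ‖(J (shift 𝕜 N x)).snd‖ := by
    simpa [WithLp.prod_norm_eq_of_L1] using hJ (shift 𝕜 N x)
  simp only [ContinuousLinearMap.comp_apply, LinearIsometry.coe_toContinuousLinearMap,
    WithLp.sndL_apply]
  linarith

/-- if `1 ≤ p < ∞` and `c₀` embeds isomorphically into `ℓ_p ⊕₁ Y`,
then `c₀` embeds isomorphically into `Y`. -/
theorem statement7 (𝕜 : Type*) [RCLike 𝕜] (p : ℝ) (hp : 1 ≤ p)
    [Fact (1 ≤ ENNReal.ofReal p)]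
    (Y : Type*) [NormedAddCommGroup Y] [NormedSpace 𝕜 Y] [CompleteSpace Y]
    (hembed : ∃ (J : ZeroAtInftyContinuousMap ℕ 𝕜 →L[𝕜]
        WithLp 1 ((lp (fun _ : ℕ => 𝕜) (ENNReal.ofReal p)) × Y)) (c : ℝ),
      0 < c ∧ ∀ x, c * ‖x‖ ≤ ‖J x‖) :
    ∃ (J' : ZeroAtInftyContinuousMap ℕ 𝕜 →L[𝕜] Y) (c' : ℝ),
      0 < c' ∧ ∀ x, c' * ‖x‖ ≤ ‖J' x‖ :=
  statement7_general 𝕜 p Y hembed
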